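/- arXiv:1109.1169 — 2 statements merged into one kernel-verified Lean document; each statement's English description precedes it below -/
import Mathlib

section
/- If α = β and k = l, the Bézier coefficients of the constrained dual Bernstein polynomials satisfy the symmetry C_{ij}(n, k, k, α, α) = C_{n-i, n-j}(n, k, k, α, α) for k ≤ i, j ≤ n-k. -/
open Finset

/-- Pochhammer symbol `(c)_k = c (c+1) ⋯ (c+k-1)`. -/
noncomputable def poch (c : ℝ) (k : ℕ) : ℝ := ∏ j ∈ Finset.range k, (c + j)

/-- Bernstein polynomial `B^n_i(x)`. -/
noncomputable def bern (n i : ℕ) (x : ℝ) : ℝ := (n.choose i : ℝ) * x ^ i * (1 - x) ^ (n - i)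

/-- Jacobi inner product on [0,1]. -/
noncomputable def jip (α β : ℝ) (f g : ℝ → ℝ) : ℝ :=
  ∫ x in (0:ℝ)..1, (1 - x) ^ α * x ^ β * f x * g x

/-- Beta function `B(a,b) = Γ(a)Γ(b)/Γ(a+b)`. -/
noncomputable def betaF (a b : ℝ) : ℝ := Real.Gamma a * Real.Gamma b / Real.Gamma (a + b)

/-- Hahn polynomial `Q_m(x; α, β, N)` as a terminating ₃F₂ sum. -/
noncomputable def hahn (m : ℕ) (x : ℝ) (α β : ℝ) (N : ℕ) : ℝ :=
  ∑ k ∈ Finset.range (m + 1),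
    poch (-(m : ℝ)) k * poch ((m : ℝ) + α + β + 1) k * poch (-x) k /
      ((k.factorial : ℝ) * poch (α + 1) k * poch (-(N : ℝ)) k)

/-- Shifted Jacobi polynomial `R_m^{(α,β)}(x)`. -/
noncomputable def sjac (m : ℕ) (α β : ℝ) (x : ℝ) : ℝ :=
  (poch (α + 1) m / (m.factorial : ℝ)) *
    ∑ k ∈ Finset.range (m + 1),
      poch (-(m : ℝ)) k * poch ((m : ℝ) + α + β + 1) k /
        ((k.factorial : ℝ) * poch (α + 1) k) * (1 - x) ^ k


/-! Writing `G` for the Gram matrix `⟨B^n_a, B^n_b⟩` on the index set `k ≤ a, b ≤ n - k`,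
the duality relations say `C * G = 1`. For `α = β` the substitution `x ↦ 1 - x` shows that
`G` is invariant under the reflection `a ↦ n - a` of rows and columns, so the reflected
matrix of `C` is again a left inverse of `G`, and left inverses of a square matrix are
unique. -/

open MeasureTheory

theorem Matrix.submatrix_eq_self_of_mul_eq_one {ι R : Type*} [Fintype ι] [DecidableEq ι]
    [CommRing R] {C G : Matrix ι ι R} (e : Equiv.Perm ι) (hCG : C * G = 1)
    (hG : G.submatrix e e = G) :
    C.submatrix e e = C := by
  have hCG' : C.submatrix e e * G = 1 := by
    rw [← hG, Matrix.submatrix_mul_equiv, hCG, Matrix.submatrix_one_equiv]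
  exact (Matrix.inv_eq_left_inv hCG').symm.trans (Matrix.inv_eq_left_inv hCG)

theorem intervalIntegrable_jacobiWeight {α β : ℝ} (hα : -1 < α) (hβ : -1 < β) :
    IntervalIntegrable (fun x : ℝ => (1 - x) ^ α * x ^ β) volume 0 1 := by
  have hc := Complex.betaIntegral_convergent (u := (β : ℂ) + 1) (v := (α : ℂ) + 1)
    (by simp; linarith) (by simp; linarith)
  rw [intervalIntegrable_iff, Set.uIoc_of_le zero_le_one] at hc ⊢
  refine IntegrableOn.congr_fun hc.re (fun x ⟨hx0, hx1⟩ => ?_) measurableSet_Ioc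
  have hx : ((1 : ℂ) - x) = ((1 - x : ℝ) : ℂ) := by push_cast; ring
  simp only [add_sub_cancel_right]
  rw [hx, ← Complex.ofReal_cpow hx0.le, ← Complex.ofReal_cpow (by linarith),
    ← Complex.ofReal_mul]
  exact (Complex.ofReal_re _).trans (mul_comm _ _)

theorem continuous_bern (n i : ℕ) : Continuous (bern n i) := by
  unfold bern; fun_prop

theorem bern_flip {n a : ℕ} (ha : a ≤ n) (x : ℝ) : bern n (n - a) x = bern n a (1 - x) := by
  simp only [bern, Nat.choose_symm ha, Nat.sub_sub_self ha, sub_sub_cancel]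
  ring

theorem jip_comp_one_sub (α β : ℝ) (f g : ℝ → ℝ) :
    jip α β (fun x => f (1 - x)) (fun x => g (1 - x)) = jip β α f g := by
  have h := intervalIntegral.integral_comp_sub_left
    (fun x => (1 - x) ^ β * x ^ α * f x * g x) (a := 0) (b := 1) (1 : ℝ)
  simp only [sub_zero, sub_self, sub_sub_cancel] at h
  unfold jip
  rw [← h]
  congr 1; funext x
  ring

theorem jip_finset_sum_left {α β : ℝ} (hα : -1 < α) (hβ : -1 < β) {ι : Type*}
    (s : Finset ι) (c : ι → ℝ) {f : ι → ℝ → ℝ} (hf : ∀ j, Continuous (f j)) {g : ℝ → ℝ}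
    (hg : Continuous g) :
    jip α β (fun x => ∑ j ∈ s, c j * f j x) g = ∑ j ∈ s, c j * jip α β (f j) g := by
  unfold jip
  simp_rw [← intervalIntegral.integral_const_mul]
  rw [← intervalIntegral.integral_finsetSum]
  · simp_rw [Finset.mul_sum, Finset.sum_mul]
    congr 1; funext x
    exact Finset.sum_congr rfl fun j _ => by ring
  · intro j _
    have h := (intervalIntegrable_jacobiWeight hα hβ).mul_continuousOn
      (((hf j).mul hg).continuousOn (s := Set.uIcc 0 1))
    refine (h.const_mul (c j)).congr_ae (.of_forall fun x => ?_)
    simp only [Pi.mul_apply]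
    ring

def reflectIcc (n k : ℕ) : Equiv.Perm (Finset.Icc k (n - k)) :=
  Function.Involutive.toPerm
    (fun a => ⟨n - a, by
      have := Finset.mem_Icc.mp a.2
      exact Finset.mem_Icc.mpr ⟨by omega, by omega⟩⟩)
    (fun a => Subtype.ext (by have := Finset.mem_Icc.mp a.2; simp only; omega))

noncomputable def bernGram (α β : ℝ) (n : ℕ) (s : Finset ℕ) : Matrix s s ℝ :=
  fun a b => jip α β (bern n a) (bern n b)

theorem bernGram_submatrix_reflectIcc (α : ℝ) (n k : ℕ) :
    (bernGram α α n _).submatrix (reflectIcc n k) (reflectIcc n k) = bernGram α α n _ := by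
  ext a b
  have hle : ∀ c : Finset.Icc k (n - k), (c : ℕ) ≤ n := fun c => by
    have := (Finset.mem_Icc.mp c.2).2; omega
  change jip α α (bern n (n - a)) (bern n (n - b)) = jip α α (bern n a) (bern n b)
  simp_rw [funext (bern_flip (hle a)), funext (bern_flip (hle b))]
  exact jip_comp_one_sub α α _ _

theorem constrained_bezier_coefficients_symmetry_general (α : ℝ) (hα : α > -1)
    (n k : ℕ)
    (Dc : ℕ → Polynomial ℝ)
    (hdual : ∀ i, k ≤ i → i ≤ n - k → ∀ j, k ≤ j → j ≤ n - k →
      jip α α (fun x => (Dc i).eval x) (bern n j) = if i = j then 1 else 0)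
    (C : ℕ → ℕ → ℝ)
    (hC : ∀ i, k ≤ i → i ≤ n - k → ∀ x : ℝ,
      (Dc i).eval x = ∑ j ∈ Finset.Icc k (n - k), C i j * bern n j x)
    (i j : ℕ) (hik : k ≤ i) (hin : i ≤ n - k) (hjk : k ≤ j) (hjn : j ≤ n - k) :
    C i j = C (n - i) (n - j) := by
  set s := Finset.Icc k (n - k)
  let Cs : Matrix s s ℝ := fun a b => C a b
  have hCG : Cs * bernGram α α n s = 1 := by
    ext ⟨a, ha⟩ ⟨b, hb⟩
    obtain ⟨hak, han⟩ := Finset.mem_Icc.mp ha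
    obtain ⟨hbk, hbn⟩ := Finset.mem_Icc.mp hb
    calc ∑ c : s, C a c * jip α α (bern n c) (bern n b)
        = ∑ c ∈ s, C a c * jip α α (bern n c) (bern n b) :=
          Finset.sum_attach s fun c => C a c * jip α α (bern n c) (bern n b)
      _ = jip α α (fun x => ∑ c ∈ s, C a c * bern n c x) (bern n b) :=
          (jip_finset_sum_left hα hα s _ (continuous_bern n) (continuous_bern n b)).symm
      _ = jip α α (fun x => (Dc a).eval x) (bern n b) := by simp_rw [hC a hak han]
      _ = (1 : Matrix s s ℝ) ⟨a, ha⟩ ⟨b, hb⟩ := by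
          simp only [hdual a hak han b hbk hbn, Matrix.one_apply, Subtype.mk.injEq]
  have hsymm := Matrix.submatrix_eq_self_of_mul_eq_one (reflectIcc n k) hCG
    (bernGram_submatrix_reflectIcc α n k)
  exact (congrFun₂ hsymm ⟨i, Finset.mem_Icc.mpr ⟨hik, hin⟩⟩
    ⟨j, Finset.mem_Icc.mpr ⟨hjk, hjn⟩⟩).symm

theorem constrained_bezier_coefficients_symmetry (α : ℝ) (hα : α > -1)
    (n k : ℕ) (hkl : k + k ≤ n)
    (Dc : ℕ → Polynomial ℝ)
    (hdeg : ∀ i, k ≤ i → i ≤ n - k → (Dc i).natDegree ≤ n)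
    (h0 : ∀ i, k ≤ i → i ≤ n - k → ∀ r < k, (Polynomial.derivative^[r] (Dc i)).eval 0 = 0)
    (h1 : ∀ i, k ≤ i → i ≤ n - k → ∀ r < k, (Polynomial.derivative^[r] (Dc i)).eval 1 = 0)
    (hdual : ∀ i, k ≤ i → i ≤ n - k → ∀ j, k ≤ j → j ≤ n - k →
      jip α α (fun x => (Dc i).eval x) (bern n j) = if i = j then 1 else 0)
    (C : ℕ → ℕ → ℝ)
    (hC : ∀ i, k ≤ i → i ≤ n - k → ∀ x : ℝ,
      (Dc i).eval x = ∑ j ∈ Finset.Icc k (n - k), C i j * bern n j x)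
    (i j : ℕ) (hik : k ≤ i) (hin : i ≤ n - k) (hjk : k ≤ j) (hjn : j ≤ n - k) :
    C i j = C (n - i) (n - j) :=
  constrained_bezier_coefficients_symmetry_general α hα n k Dc hdual C hC i j hik hin hjk hjn
end

section
/- The Jacobi inner product of a Bernstein polynomial and a constrained dual Bernstein polynomial is K_{ij} := ⟨B^m_j, D^{(m,k,l)}_i⟩ = C(m,j)/C(m,i) · (-1)^{i-k} (k-j)_{m-k-l+1} / ((i-j)(i-k)!(m-l-i)!) · (α+l+1)_{m-j}(β+k+1)_j / ((α+l+1)_{m-i}(β+k+1)_i), valid for k ≤ i ≤ m-l and 0 ≤ j ≤ m with j ≠ i and (j < k or j > m-l). -/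
open Finset

open Polynomial

lemma poch_succ (c : ℝ) (n : ℕ) : poch c (n+1) = poch c n * (c + n) :=
  Finset.prod_range_succ _ _

lemma poch_pos {c : ℝ} (hc : 0 < c) (n : ℕ) : 0 < poch c n :=
  Finset.prod_pos fun j _ => by positivity

lemma poch_add (c : ℝ) (a b : ℕ) : poch c (a+b) = poch c a * poch (c + a) b := by
  rw [poch, Finset.prod_range_add, ← poch]
  congr 1
  refine Finset.prod_congr rfl fun j _ => ?_
  push_cast; ring

lemma Gamma_poch {c : ℝ} (hc : 0 < c) (n : ℕ) :
    Real.Gamma (c + n) = Real.Gamma c * poch c n := by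
  induction n with
  | zero => simp [poch]
  | succ n ih =>
    have h1 : c + (n+1 : ℕ) = (c + n) + 1 := by push_cast; ring
    rw [h1, Real.Gamma_add_one (by positivity), ih, poch_succ]; ring

lemma Jaux (α β : ℝ) (hα : -1 < α) (hβ : -1 < β) (p n : ℕ) :
    IntervalIntegrable (fun x => (1-x)^α * x^β * (x^p * (1-x)^n)) MeasureTheory.volume 0 1 ∧
    ∫ x in (0:ℝ)..1, (1-x)^α * x^β * (x^p*(1-x)^n)
      = Real.Gamma (β+p+1) * Real.Gamma (α+n+1) / Real.Gamma (α+β+p+n+2) := by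
  set g : ℝ → ℝ := fun x => (1-x)^α * x^β * (x^p * (1-x)^n) with hg
  set u : ℂ := ((β+p+1 : ℝ) : ℂ) with hu
  set v : ℂ := ((α+n+1 : ℝ) : ℂ) with hv
  have hup : 0 < u.re := by
    simp only [hu, Complex.ofReal_re]
    have : (0:ℝ) ≤ p := Nat.cast_nonneg p
    linarith
  have hvp : 0 < v.re := by
    simp only [hv, Complex.ofReal_re]
    have : (0:ℝ) ≤ n := Nat.cast_nonneg n
    linarith
  have hae : ∀ᵐ x ∂(MeasureTheory.volume : MeasureTheory.Measure ℝ),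
      x ∈ Set.uIoc (0:ℝ) 1 → (x:ℂ)^(u-1) * (1-(x:ℂ))^(v-1) = ((g x : ℝ) : ℂ) := by
    have h1 : ∀ᵐ x ∂(MeasureTheory.volume : MeasureTheory.Measure ℝ), x ≠ 1 := by
      rw [MeasureTheory.ae_iff]
      have hs : {x : ℝ | ¬ x ≠ 1} = {1} := by ext x; simp
      rw [hs]; exact Real.volume_singleton
    filter_upwards [h1] with x hx1 hxI
    rw [Set.uIoc_of_le (by norm_num : (0:ℝ) ≤ 1)] at hxI
    have hx0 : 0 < x := hxI.1
    have hx1' : x < 1 := lt_of_le_of_ne hxI.2 hx1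
    have hox : (0:ℝ) < 1 - x := by linarith
    have e1 : (x:ℂ)^(u-1) = (((x:ℝ)^(β+p) : ℝ) : ℂ) := by
      rw [show u - 1 = (((β+(p:ℝ)) : ℝ) : ℂ) by rw [hu]; push_cast; ring,
        ← Complex.ofReal_cpow hx0.le]
    have e2 : (1-(x:ℂ))^(v-1) = ((((1-x):ℝ)^(α+n) : ℝ) : ℂ) := by
      rw [show (1 - (x:ℂ)) = (((1-x : ℝ)):ℂ) by push_cast; ring,
        show v - 1 = (((α+(n:ℝ)) : ℝ) : ℂ) by rw [hv]; push_cast; ring,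
        ← Complex.ofReal_cpow hox.le]
    rw [e1, e2, ← Complex.ofReal_mul]
    congr 1
    rw [hg]
    simp only []
    rw [Real.rpow_add hx0, Real.rpow_natCast, Real.rpow_add hox, Real.rpow_natCast]
    ring
  have hconv := Complex.betaIntegral_convergent hup hvp
  have hint : IntervalIntegrable g MeasureTheory.volume 0 1 := by
    rw [intervalIntegrable_iff] at hconv ⊢
    refine (hconv.re).congr ?_
    refine (MeasureTheory.ae_restrict_iff' measurableSet_uIoc).2 ?_
    filter_upwards [hae] with x hx hxI
    rw [hx hxI]
    simp
  refine ⟨hint, ?_⟩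
  have hbeta : Complex.betaIntegral u v = ((∫ x in (0:ℝ)..1, g x : ℝ) : ℂ) := by
    rw [Complex.betaIntegral]
    rw [intervalIntegral.integral_congr_ae hae, intervalIntegral.integral_ofReal]
  have hGG := Complex.Gamma_mul_Gamma_eq_betaIntegral hup hvp
  rw [hbeta] at hGG
  have huv : u + v = ((α+β+p+n+2 : ℝ) : ℂ) := by rw [hu, hv]; push_cast; ring
  rw [huv, hu, hv, Complex.Gamma_ofReal, Complex.Gamma_ofReal, Complex.Gamma_ofReal,
    ← Complex.ofReal_mul, ← Complex.ofReal_mul] at hGG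
  have hreal : Real.Gamma (β+p+1) * Real.Gamma (α+n+1)
      = Real.Gamma (α+β+p+n+2) * ∫ x in (0:ℝ)..1, g x := by exact_mod_cast hGG
  have hGpos : 0 < Real.Gamma (α+β+p+n+2) := by
    apply Real.Gamma_pos_of_pos
    have h1 : (0:ℝ) ≤ p := Nat.cast_nonneg p
    have h2 : (0:ℝ) ≤ n := Nat.cast_nonneg n
    linarith
  rw [eq_div_iff hGpos.ne']
  linarith [hreal]

-- product over range s of (s - r) equals s!
lemma prodC (s : ℕ) : ∏ r ∈ range s, ((s:ℝ) - r) = s.factorial := by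
  have h : ∀ r ∈ range s, ((s:ℝ) - r) = (((s - r : ℕ) : ℕ) : ℝ) := by
    intro r hr
    rw [mem_range] at hr
    rw [Nat.cast_sub hr.le]
  rw [Finset.prod_congr rfl h, ← Nat.cast_prod]
  congr 1
  rw [← Finset.prod_range_reflect (fun r => s - r) s]
  rw [← Finset.prod_range_add_one_eq_factorial]
  refine Finset.prod_congr rfl fun j hj => ?_
  rw [mem_range] at hj
  omega

lemma prodA (s d : ℕ) : ∏ r ∈ (range (s+d+1)).erase s, ((s:ℝ) - r)
    = (-1)^d * s.factorial * d.factorial := by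
  induction d with
  | zero =>
    rw [show s + 0 + 1 = s + 1 by ring, Finset.range_add_one, Finset.erase_insert (by simp)]
    simp [prodC]
  | succ d ih =>
    have h1 : (range (s+(d+1)+1)).erase s = insert (s+d+1) ((range (s+d+1)).erase s) := by
      rw [show s+(d+1)+1 = (s+d+1)+1 by ring, Finset.range_add_one,
        Finset.erase_insert_of_ne (by omega)]
    rw [h1, Finset.prod_insert (by simp), ih]
    have : ((s:ℝ) - (s+d+1:ℕ)) = -((d:ℝ)+1) := by push_cast; ring
    rw [this]
    rw [Nat.factorial_succ]
    push_cast
    ring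

lemma lemA (M q : ℕ) (hq : q ≤ M) (u t : ℝ) (ht : ∀ s : ℕ, s ≤ M → t + s ≠ 0) :
    poch (u - t) q = poch t (M+1) * ∑ s ∈ range (M+1),
      (-1:ℝ)^s * poch (u + s) q / ((t + s) * s.factorial * (M - s).factorial) := by
  set n := M + 1 with hn
  set H : ℝ[X] := ∏ r ∈ range q, (X + C (u + r)) with hH
  have hHeval : ∀ x : ℝ, H.eval x = poch (u + x) q := by
    intro x
    rw [hH, eval_prod, poch]
    refine Finset.prod_congr rfl fun r _ => ?_
    simp; ring
  have hmonic : H.Monic := monic_prod_of_monic _ _ fun r _ => monic_X_add_C _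
  have hdeg : H.natDegree = q := by
    rw [hH, natDegree_prod _ _ fun r _ => (monic_X_add_C _).ne_zero]
    simp only [natDegree_X_add_C]
    simp
  have hvs : Set.InjOn (fun s : ℕ => (s:ℝ)) (range n) :=
    fun a _ b _ h => Nat.cast_injective h
  have hdlt : H.degree < (#(range n) : WithBot ℕ) := by
    rw [Finset.card_range]
    refine lt_of_le_of_lt (degree_le_natDegree) ?_
    rw [hdeg]
    exact_mod_cast Nat.lt_succ_of_le hq
  have hint := Lagrange.eq_interpolate hvs hdlt
  have heval := congrArg (eval (-t)) hint
  rw [hHeval (-t), Lagrange.interpolate_apply, eval_finset_sum] at heval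
  have hterm : ∀ s ∈ range n,
      eval (-t) (C (H.eval ((s:ℕ):ℝ)) * Lagrange.basis (range n) (fun s : ℕ => (s:ℝ)) s)
      = poch t n * ((-1:ℝ)^s * poch (u + s) q / ((t + s) * s.factorial * (M - s).factorial)) := by
    intro s hs
    rw [mem_range] at hs
    have hsM : s ≤ M := by omega
    rw [eval_mul, eval_C, hHeval, Lagrange.basis, eval_prod]
    have hbd : ∀ r ∈ (range n).erase s,
        eval (-t) (Lagrange.basisDivisor ((s:ℕ):ℝ) ((r:ℕ):ℝ))
          = ((s:ℝ) - r)⁻¹ * (-t - r) := by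
      intro r _
      rw [Lagrange.basisDivisor]
      simp
    rw [Finset.prod_congr rfl hbd, Finset.prod_mul_distrib, Finset.prod_inv_distrib]
    have hA : ∏ r ∈ (range n).erase s, ((s:ℝ) - r)
        = (-1)^(M-s) * s.factorial * (M-s).factorial := by
      have : n = s + (M - s) + 1 := by omega
      rw [this]
      exact prodA s (M - s)
    have hB : ∏ r ∈ (range n).erase s, (-t - (r:ℝ))
        = (-1)^M * (poch t n / (t + s)) := by
      have h1 : ∀ r ∈ (range n).erase s, (-t - (r:ℝ)) = (-1) * (t + r) := by
        intro r _; ring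
      rw [Finset.prod_congr rfl h1, Finset.prod_mul_distrib, Finset.prod_const,
        Finset.card_erase_of_mem (mem_range.2 hs), Finset.card_range]
      have h2 : ∏ r ∈ (range n).erase s, (t + (r:ℝ)) = poch t n / (t + s) := by
        rw [eq_div_iff (ht s hsM), mul_comm, poch]
        exact Finset.mul_prod_erase (range n) (fun x : ℕ => t + (x:ℝ)) (mem_range.2 hs)
      rw [h2, show n - 1 = M from rfl]
    rw [hA, hB]
    have hfac1 : (s.factorial : ℝ) ≠ 0 := Nat.cast_ne_zero.2 s.factorial_ne_zero
    have hfac2 : ((M-s).factorial : ℝ) ≠ 0 := Nat.cast_ne_zero.2 (M-s).factorial_ne_zero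
    have hts := ht s hsM
    have hsgn' : (-1:ℝ)^M = (-1)^s * (-1)^(M-s) := by
      rw [← pow_add]
      congr 1
      omega
    field_simp
    rw [hsgn']
    ring
  rw [Finset.sum_congr rfl hterm, ← Finset.mul_sum,
    show u + -t = u - t by ring] at heval
  exact heval

lemma factorDc (m k l : ℕ) (Dc : ℝ[X]) (hne : Dc ≠ 0) (hdeg : Dc.natDegree ≤ m)
    (h0 : ∀ r < k, (Polynomial.derivative^[r] Dc).eval 0 = 0)
    (h1 : ∀ r < l, (Polynomial.derivative^[r] Dc).eval 1 = 0) :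
    ∃ P : ℝ[X], P.natDegree ≤ m - k - l ∧ ∀ x : ℝ, Dc.eval x = x^k * (1-x)^l * P.eval x := by
  have hXk : (X - C (0:ℝ))^k ∣ Dc := by
    rcases Nat.eq_zero_or_pos k with hk | hk
    · simp [hk]
    · have hlt : k - 1 < Dc.rootMultiplicity 0 := by
        apply Polynomial.lt_rootMultiplicity_of_isRoot_iterate_derivative_of_mem_nonZeroDivisors'
          hne (fun r hr => h0 r (by omega))
        intro r _ hr0
        exact mem_nonZeroDivisors_of_ne_zero (Nat.cast_ne_zero.2 hr0)
      exact dvd_trans (pow_dvd_pow _ (by omega)) (Dc.pow_rootMultiplicity_dvd 0)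
  have hX1 : (X - C (1:ℝ))^l ∣ Dc := by
    rcases Nat.eq_zero_or_pos l with hl | hl
    · simp [hl]
    · have hlt : l - 1 < Dc.rootMultiplicity 1 := by
        apply Polynomial.lt_rootMultiplicity_of_isRoot_iterate_derivative_of_mem_nonZeroDivisors'
          hne (fun r hr => h1 r (by omega))
        intro r _ hr0
        exact mem_nonZeroDivisors_of_ne_zero (Nat.cast_ne_zero.2 hr0)
      exact dvd_trans (pow_dvd_pow _ (by omega)) (Dc.pow_rootMultiplicity_dvd 1)
  have hcop : IsCoprime ((X - C (0:ℝ))^k) ((X - C (1:ℝ))^l) := by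
    apply IsCoprime.pow
    apply Polynomial.isCoprime_X_sub_C_of_isUnit_sub
    norm_num
  obtain ⟨P0, hP0⟩ := hcop.mul_dvd hXk hX1
  have hP0ne : P0 ≠ 0 := by
    intro h
    rw [h, mul_zero] at hP0
    exact hne hP0
  have hfne : (X - C (0:ℝ))^k * (X - C (1:ℝ))^l ≠ 0 := by
    apply mul_ne_zero <;> exact pow_ne_zero _ (X_sub_C_ne_zero _)
  have hdeg2 : Dc.natDegree = k + l + P0.natDegree := by
    rw [hP0, natDegree_mul hfne hP0ne, natDegree_mul (pow_ne_zero _ (X_sub_C_ne_zero _))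
      (pow_ne_zero _ (X_sub_C_ne_zero _)), natDegree_pow, natDegree_pow, natDegree_X_sub_C, natDegree_X_sub_C]
    ring
  refine ⟨C ((-1:ℝ)^l) * P0, ?_, ?_⟩
  · rw [natDegree_C_mul (by positivity : ((-1:ℝ)^l) ≠ 0)]
    omega
  · intro x
    rw [hP0]
    simp only [eval_mul, eval_pow, eval_sub, eval_X, eval_C]
    have : (x - 1)^l = (-1:ℝ)^l * (1-x)^l := by
      rw [show x - 1 = -(1-x) by ring, neg_pow]
    rw [this]
    ring

noncomputable def Grow (α β : ℝ) (m k l r q : ℕ) : ℝ :=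
  (m.choose r : ℝ) * (Real.Gamma (β + ((r+k+q : ℕ) : ℝ) + 1) *
    Real.Gamma (α + (((m-r)+l : ℕ) : ℝ) + 1) /
    Real.Gamma (α + β + ((r+k+q : ℕ) : ℝ) + (((m-r)+l : ℕ) : ℝ) + 2))

lemma row (α β : ℝ) (hα : α > -1) (hβ : β > -1) (m k l M : ℕ)
    (P : ℝ[X]) (hP : P.natDegree ≤ M) (f : ℝ → ℝ)
    (hf : ∀ x : ℝ, f x = x^k * (1-x)^l * P.eval x) (r : ℕ) (hr : r ≤ m) :
    jip α β (bern m r) f = ∑ q ∈ range (M+1), P.coeff q * Grow α β m k l r q := by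
  rw [jip]
  have hintg : Set.EqOn
      (fun x => (1 - x) ^ α * x ^ β * bern m r x * f x)
      (fun x => ∑ q ∈ range (M+1), (P.coeff q * (m.choose r : ℝ)) *
        ((1-x)^α * x^β * (x^(r+k+q) * (1-x)^((m-r)+l)))) (Set.uIcc (0:ℝ) 1) := by
    intro x _
    simp only []
    rw [hf x, bern, Polynomial.eval_eq_sum_range' (Nat.lt_succ_of_le hP), Finset.mul_sum,
      Finset.mul_sum]
    refine Finset.sum_congr rfl fun q _ => ?_
    rw [pow_add, pow_add, pow_add]
    ring
  rw [intervalIntegral.integral_congr hintg,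
    intervalIntegral.integral_finset_sum (fun q _ =>
      ((Jaux α β hα hβ (r+k+q) ((m-r)+l)).1.const_mul _))]
  refine Finset.sum_congr rfl fun q _ => ?_
  rw [intervalIntegral.integral_const_mul, (Jaux α β hα hβ (r+k+q) ((m-r)+l)).2, Grow]
  ring

lemma Grow_eq (α β : ℝ) (hα : α > -1) (hβ : β > -1) (m k l r q : ℕ) (hr : r ≤ m) :
    Grow α β m k l r q =
      (Real.Gamma (β+k+1) * Real.Gamma (α+l+1) / Real.Gamma (α+β+((m+k+l+q : ℕ) : ℝ)+2)) *
      ((m.choose r : ℝ) * (poch (β+k+1) r * poch (β+(k:ℝ)+1+r) q) * poch (α+(l:ℝ)+1) (m-r)) := by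
  have hb : (0:ℝ) < β + k + 1 := by
    have : (0:ℝ) ≤ k := Nat.cast_nonneg k
    linarith
  have ha : (0:ℝ) < α + l + 1 := by
    have : (0:ℝ) ≤ l := Nat.cast_nonneg l
    linarith
  rw [Grow,
    show (β + ((r+k+q : ℕ) : ℝ) + 1) = (β+(k:ℝ)+1) + ((r+q : ℕ) : ℝ) by push_cast; ring,
    show (α + (((m-r)+l : ℕ) : ℝ) + 1) = (α+(l:ℝ)+1) + ((m-r : ℕ) : ℝ) by push_cast; ring,
    show (α + β + ((r+k+q : ℕ) : ℝ) + (((m-r)+l : ℕ) : ℝ) + 2)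
      = α+β+((m+k+l+q : ℕ) : ℝ)+2 by
        rw [show α + β + ((r+k+q : ℕ) : ℝ) + (((m-r)+l : ℕ) : ℝ) + 2
          = α + β + (((r+k+q) + ((m-r)+l) : ℕ) : ℝ) + 2 by push_cast; ring,
          show (r+k+q) + ((m-r)+l) = m+k+l+q by omega],
    Gamma_poch hb (r+q), Gamma_poch ha (m-r), poch_add]
  push_cast
  ring

lemma tne (m k l j : ℕ) (hkl : k + l ≤ m) (hj : j ≤ m) (hjout : j < k ∨ j > m - l) :
    ∀ s : ℕ, s ≤ m - k - l → ((k:ℝ) - (j:ℝ)) + (s:ℝ) ≠ 0 := by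
  intro s hs h
  have hne : k + s ≠ j := by omega
  apply hne
  have : ((k + s : ℕ) : ℝ) = (j : ℝ) := by push_cast; linarith
  exact_mod_cast this

noncomputable def Kco (α β : ℝ) (m k l j r : ℕ) : ℝ :=
  ((m.choose j : ℝ) / (m.choose r : ℝ)) *
    ((-1 : ℝ) ^ (r - k) * poch ((k : ℝ) - (j : ℝ)) (m - k - l + 1) /
      (((r : ℝ) - (j : ℝ)) * ((r - k).factorial : ℝ) * ((m - l - r).factorial : ℝ))) *
    (poch (α + l + 1) (m - j) * poch (β + k + 1) j /
      (poch (α + l + 1) (m - r) * poch (β + k + 1) r))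

lemma keyq (α β : ℝ) (hα : α > -1) (hβ : β > -1) (m k l j q : ℕ) (hkl : k + l ≤ m)
    (hj : j ≤ m) (hjout : j < k ∨ j > m - l) (hq : q ≤ m - k - l) :
    Grow α β m k l j q = ∑ r ∈ Icc k (m-l), Kco α β m k l j r * Grow α β m k l r q := by
  have hb : (0:ℝ) < β + k + 1 := by
    have : (0:ℝ) ≤ k := Nat.cast_nonneg k; linarith
  have ha : (0:ℝ) < α + l + 1 := by
    have : (0:ℝ) ≤ l := Nat.cast_nonneg l; linarith
  set M := m - k - l with hM
  set t : ℝ := (k:ℝ) - (j:ℝ) with hT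
  set u : ℝ := β + (k:ℝ) + 1 + (k:ℝ) with hu
  have ht := tne m k l j hkl hj hjout
  set A : ℝ := (m.choose j : ℝ) * poch (β+(k:ℝ)+1) j * poch (α+(l:ℝ)+1) (m-j) with hA
  have hW : (m.choose j : ℝ) * (poch (β+(k:ℝ)+1) j * poch (β+(k:ℝ)+1+(j:ℝ)) q) *
        poch (α+(l:ℝ)+1) (m-j)
      = ∑ r ∈ Icc k (m-l), Kco α β m k l j r *
        ((m.choose r : ℝ) * (poch (β+(k:ℝ)+1) r * poch (β+(k:ℝ)+1+(r:ℝ)) q) *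
          poch (α+(l:ℝ)+1) (m-r)) := by
    rw [← Finset.Ico_add_one_right_eq_Icc, Finset.sum_Ico_eq_sum_range, show m - l + 1 - k = M + 1 by omega]
    have hterm : ∀ s ∈ range (M+1), Kco α β m k l j (k+s) *
        ((m.choose (k+s) : ℝ) * (poch (β+(k:ℝ)+1) (k+s) * poch (β+(k:ℝ)+1+((k+s : ℕ):ℝ)) q) *
          poch (α+(l:ℝ)+1) (m-(k+s)))
        = (A * poch t (M+1)) *
          ((-1:ℝ)^s * poch (u + s) q / ((t + s) * s.factorial * (M - s).factorial)) := by
      intro s hs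
      rw [mem_range] at hs
      have hsM : s ≤ M := by omega
      have hch : ((m.choose (k+s) : ℕ) : ℝ) ≠ 0 :=
        Nat.cast_ne_zero.2 (Nat.choose_pos (by omega : k+s ≤ m)).ne'
      have hpB : poch (β+(k:ℝ)+1) (k+s) ≠ 0 := (poch_pos hb _).ne'
      have hpA : poch (α+(l:ℝ)+1) (m-(k+s)) ≠ 0 := (poch_pos ha _).ne'
      have hts : t + (s:ℝ) ≠ 0 := ht s hsM
      have hf1 : (s.factorial : ℝ) ≠ 0 := Nat.cast_ne_zero.2 s.factorial_ne_zero
      have hf2 : ((M-s).factorial : ℝ) ≠ 0 := Nat.cast_ne_zero.2 (M-s).factorial_ne_zero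
      rw [Kco, show (k+s) - k = s from Nat.add_sub_cancel_left k s,
        show m - l - (k+s) = M - s by omega,
        show β+(k:ℝ)+1+((k+s : ℕ):ℝ) = u + (s:ℝ) by push_cast; ring,
        show ((k+s : ℕ):ℝ) - (j:ℝ) = t + (s:ℝ) by push_cast; ring]
      rw [hA, ← hM]
      field_simp
      ring
    rw [Finset.sum_congr rfl hterm, ← Finset.mul_sum, mul_assoc A (poch t (M+1)),
      ← lemA M q hq u t ht,
      show u - t = β+(k:ℝ)+1+(j:ℝ) by rw [hu, hT]; ring, hA]
    ring
  rw [Grow_eq α β hα hβ m k l j q hj, hW, Finset.mul_sum]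
  refine Finset.sum_congr rfl fun r hr => ?_
  rw [Grow_eq α β hα hβ m k l r q (le_trans (Finset.mem_Icc.1 hr).2 (by omega : m - l ≤ m))]
  ring


theorem bernstein_constrained_dual_inner_product (α β : ℝ) (hα : α > -1) (hβ : β > -1)
    (m k l i j : ℕ) (hkl : k + l ≤ m) (hik : k ≤ i) (hil : i ≤ m - l)
    (hj : j ≤ m) (hji : j ≠ i) (hjout : j < k ∨ j > m - l)
    (Dc : Polynomial ℝ) (hdeg : Dc.natDegree ≤ m)
    (h0 : ∀ r < k, (Polynomial.derivative^[r] Dc).eval 0 = 0)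
    (h1 : ∀ r < l, (Polynomial.derivative^[r] Dc).eval 1 = 0)
    (hdual : ∀ r, k ≤ r → r ≤ m - l →
      jip α β (fun x => Dc.eval x) (bern m r) = if i = r then 1 else 0) :
    jip α β (bern m j) (fun x => Dc.eval x) =
      ((m.choose j : ℝ) / (m.choose i : ℝ)) *
        ((-1 : ℝ) ^ (i - k) * poch ((k : ℝ) - (j : ℝ)) (m - k - l + 1) /
          (((i : ℝ) - (j : ℝ)) * ((i - k).factorial : ℝ) * ((m - l - i).factorial : ℝ))) *
        (poch (α + l + 1) (m - j) * poch (β + k + 1) j /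
          (poch (α + l + 1) (m - i) * poch (β + k + 1) i)) := by
  have hne : Dc ≠ 0 := by
    intro h
    have hd := hdual i hik hil
    rw [if_pos rfl, h] at hd
    simp [jip] at hd
  obtain ⟨P, hPdeg, hPev⟩ := factorDc m k l Dc hne hdeg h0 h1
  set M := m - k - l with hM
  have hsym : ∀ r : ℕ, jip α β (fun x => Dc.eval x) (bern m r)
      = jip α β (bern m r) (fun x => Dc.eval x) := by
    intro r
    rw [jip, jip]
    apply intervalIntegral.integral_congr
    intro x _
    simp only []
    ring
  have hrow : ∀ r, r ≤ m → jip α β (bern m r) (fun x => Dc.eval x)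
      = ∑ q ∈ range (M+1), P.coeff q * Grow α β m k l r q :=
    fun r hr => row α β hα hβ m k l M P hPdeg _ hPev r hr
  have hdual' : ∀ r ∈ Icc k (m-l),
      jip α β (bern m r) (fun x => Dc.eval x) = if i = r then 1 else 0 := by
    intro r hr
    rw [← hsym r]
    exact hdual r (Finset.mem_Icc.1 hr).1 (Finset.mem_Icc.1 hr).2
  have hmain : jip α β (bern m j) (fun x => Dc.eval x) = Kco α β m k l j i := by
    rw [hrow j hj]
    have h1 : ∀ q ∈ range (M+1), P.coeff q * Grow α β m k l j q
        = ∑ r ∈ Icc k (m-l), Kco α β m k l j r * (P.coeff q * Grow α β m k l r q) := by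
      intro q hq
      rw [keyq α β hα hβ m k l j q hkl hj hjout (Nat.lt_succ_iff.1 (Finset.mem_range.1 hq)),
        Finset.mul_sum]
      exact Finset.sum_congr rfl fun r _ => by ring
    rw [Finset.sum_congr rfl h1, Finset.sum_comm]
    have h2 : ∀ r ∈ Icc k (m-l),
        (∑ q ∈ range (M+1), Kco α β m k l j r * (P.coeff q * Grow α β m k l r q))
          = Kco α β m k l j r * (if i = r then 1 else 0) := by
      intro r hr
      rw [← Finset.mul_sum,
        ← hrow r (le_trans (Finset.mem_Icc.1 hr).2 (by omega : m - l ≤ m)), hdual' r hr]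
    rw [Finset.sum_congr rfl h2,
      Finset.sum_eq_single_of_mem i (Finset.mem_Icc.2 ⟨hik, hil⟩)
        (fun r _ hri => by rw [if_neg (fun h => hri h.symm), mul_zero])]
    rw [if_pos rfl, mul_one]
  rw [hmain, Kco]
end
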